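/- arXiv:2402.00318 — 4 statements merged into one kernel-verified Lean document; each statement's English description precedes it below -/
import Mathlib

section
/- Let S ⊊ {1,…,N} be a set of digital devices with nonempty complement, and let μ = min_{m∉S} s_m. If n ∈ S satisfies s_n ≥ μ, then min_{m∉(S∖{n})} s_m = μ, and consequently MSE(S∖{n}) ≤ MSE(S) and delay(S∖{n}) ≤ delay(S); that is, rescheduling a digital device whose scheduling metric is at least the smallest scheduling metric among OTA devices to OTA transmission does not increase the mean squared error and does not increase the round delay. -/
/-- Rescheduling a digital device whose scheduling metric is at least the smallest
scheduling metric among OTA devices to OTA transmission preserves the minimum OTA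
scheduling metric, and hence does not increase the MSE nor the round delay. -/
theorem stmt_0 {N : ℕ} (s e τ : Fin N → ℝ) (C τ₀ : ℝ)
    (hs : ∀ m, 0 < s m) (he : ∀ m, 0 ≤ e m) (hτ : ∀ m, 0 ≤ τ m)
    (hC : 0 < C) (hτ₀ : 0 ≤ τ₀)
    (S : Finset (Fin N)) (hSu : S ≠ Finset.univ) (hS : Sᶜ.Nonempty)
    (n : Fin N) (hn : n ∈ S)
    (μ : ℝ) (hμ : μ = Sᶜ.inf' hS s) (hsn : μ ≤ s n) :
    (S \ {n})ᶜ.inf'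
        (hS.mono (Finset.compl_subset_compl.mpr (Finset.sdiff_subset))) s = μ ∧
    (∑ m ∈ S \ {n}, e m) +
        C / ((S \ {n})ᶜ.inf'
          (hS.mono (Finset.compl_subset_compl.mpr (Finset.sdiff_subset))) s) ^ 2
      ≤ (∑ m ∈ S, e m) + C / μ ^ 2 ∧
    (∑ m ∈ S \ {n}, τ m) + τ₀ ≤ (∑ m ∈ S, τ m) + τ₀ := by
  have hne := hS.mono (Finset.compl_subset_compl.mpr (Finset.sdiff_subset (s := S) (t := {n})))
  have key : (S \ {n})ᶜ.inf' hne s = μ := by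
    apply le_antisymm
    · subst hμ
      apply Finset.le_inf'
      intro b hb
      exact Finset.inf'_le _ (Finset.mem_of_subset
        (Finset.compl_subset_compl.mpr Finset.sdiff_subset) hb)
    · apply Finset.le_inf'
      intro b hb
      rcases Finset.mem_compl.mp hb with h
      by_cases hbn : b = n
      · subst hbn; exact hsn
      · have : b ∈ Sᶜ := by
          simp only [Finset.mem_sdiff, Finset.mem_singleton, not_and, not_not] at h
          exact Finset.mem_compl.mpr fun hbS => hbn (h hbS)
        exact hμ ▸ Finset.inf'_le _ this
  refine ⟨key, ?_, ?_⟩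
  · rw [key]
    have : ∑ m ∈ S \ {n}, e m ≤ ∑ m ∈ S, e m :=
      Finset.sum_le_sum_of_subset_of_nonneg Finset.sdiff_subset (fun i _ _ => he i)
    linarith
  · have : ∑ m ∈ S \ {n}, τ m ≤ ∑ m ∈ S, τ m :=
      Finset.sum_le_sum_of_subset_of_nonneg Finset.sdiff_subset (fun i _ _ => hτ i)
    linarith
end

section
/- (Theorem 1) For every set S ⊊ {1,…,N} of digital devices with nonempty complement, letting μ = min_{m∉S} s_m, the set T = {m ∈ {1,…,N} : s_m < μ} satisfies T ⊆ S, min_{m∉T} s_m = μ, MSE(T) ≤ MSE(S), and delay(T) ≤ delay(S). Moreover, if the scheduling metrics are strictly increasing, s_1 < s_2 < ⋯ < s_N, then T = {1,…,j} for some 0 ≤ j < N; hence every scheduling configuration is dominated (in both MSE and delay) by a configuration in which the digital devices are those with the smallest scheduling metrics. -/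
/-- Theorem 1: every scheduling configuration `S` (set of digital devices with
nonempty complement) is dominated, in both MSE and round delay, by the
configuration `T = {m : s m < μ}` consisting of the devices whose scheduling
metric is below `μ = min_{m ∉ S} s m`; moreover if the metrics are strictly
increasing then `T` is a prefix `{1, …, j}` with `0 ≤ j < N`, i.e. the digital
devices are those with the smallest scheduling metrics. -/
theorem stmt_1 {N : ℕ} (s e τ : Fin N → ℝ) (C τ₀ : ℝ)
    (hs : ∀ m, 0 < s m) (he : ∀ m, 0 ≤ e m) (hτ : ∀ m, 0 ≤ τ m)
    (hC : 0 < C) (hτ₀ : 0 ≤ τ₀)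
    (S : Finset (Fin N)) (hSu : S ≠ Finset.univ) (hS : Sᶜ.Nonempty)
    (μ : ℝ) (hμ : μ = Sᶜ.inf' hS s)
    (T : Finset (Fin N)) (hT : T = Finset.univ.filter (fun m => s m < μ)) :
    ∃ hTc : Tᶜ.Nonempty,
      T ⊆ S ∧
      Tᶜ.inf' hTc s = μ ∧
      (∑ m ∈ T, e m) + C / (Tᶜ.inf' hTc s) ^ 2
        ≤ (∑ m ∈ S, e m) + C / μ ^ 2 ∧
      (∑ m ∈ T, τ m) + τ₀ ≤ (∑ m ∈ S, τ m) + τ₀ ∧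
      (StrictMono s → ∃ j : ℕ, j < N ∧
        T = Finset.univ.filter (fun m : Fin N => (m : ℕ) < j)) := by
  -- a witness achieving μ
  obtain ⟨a, haSc, ha⟩ := Finset.exists_mem_eq_inf' hS s
  have haμ : s a = μ := by rw [hμ, ha]
  have hTmem : ∀ m, m ∈ T ↔ s m < μ := by
    intro m; rw [hT]; simp
  have hTsub : T ⊆ S := by
    intro m hm
    by_contra hns
    have hmSc : m ∈ Sᶜ := Finset.mem_compl.2 hns
    have : μ ≤ s m := hμ ▸ Finset.inf'_le s hmSc
    exact absurd ((hTmem m).1 hm) (not_lt.2 this)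
  have haTc : a ∈ Tᶜ := by
    rw [Finset.mem_compl, hTmem]
    simp [haμ]
  have hTc : Tᶜ.Nonempty := ⟨a, haTc⟩
  refine ⟨hTc, hTsub, ?_, ?_, ?_, ?_⟩
  · -- inf over Tᶜ = μ
    apply le_antisymm
    · exact haμ ▸ Finset.inf'_le s haTc
    · apply Finset.le_inf'
      intro b hb
      rw [Finset.mem_compl, hTmem] at hb
      exact not_lt.1 hb
  · have hinf : Tᶜ.inf' hTc s = μ := by
      apply le_antisymm
      · exact haμ ▸ Finset.inf'_le s haTc
      · apply Finset.le_inf'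
        intro b hb
        rw [Finset.mem_compl, hTmem] at hb
        exact not_lt.1 hb
    rw [hinf]
    have : (∑ m ∈ T, e m) ≤ ∑ m ∈ S, e m :=
      Finset.sum_le_sum_of_subset_of_nonneg hTsub (fun i _ _ => he i)
    linarith
  · have : (∑ m ∈ T, τ m) ≤ ∑ m ∈ S, τ m :=
      Finset.sum_le_sum_of_subset_of_nonneg hTsub (fun i _ _ => hτ i)
    linarith
  · intro hmono
    refine ⟨a, a.2, ?_⟩
    rw [hT]
    ext m
    simp only [Finset.mem_filter, Finset.mem_univ, true_and]
    rw [← haμ]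
    constructor
    · intro h
      exact hmono.lt_iff_lt.1 h
    · intro h
      exact hmono (by exact_mod_cast h)
end

section
/- Let S ⊊ {1,…,N} be a set of digital devices with nonempty complement and μ = min_{m∉S} s_m. If some n ∈ S satisfies s_n ≥ μ and e_n > 0, then MSE(S∖{n}) < MSE(S); that is, any scheduling configuration in which a device with strictly positive digital error term and scheduling metric at least the minimum OTA scheduling metric is scheduled digitally is strictly suboptimal in MSE. -/
/-- A scheduling configuration in which some device `n` with strictly positive
digital error term and scheduling metric at least the minimum OTA scheduling
metric is scheduled digitally is strictly suboptimal in MSE: moving `n` to OTA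
strictly decreases the MSE. -/
theorem stmt_2 {N : ℕ} (s e τ : Fin N → ℝ) (C τ₀ : ℝ)
    (hs : ∀ m, 0 < s m) (he : ∀ m, 0 ≤ e m) (hτ : ∀ m, 0 ≤ τ m)
    (hC : 0 < C) (hτ₀ : 0 ≤ τ₀)
    (S : Finset (Fin N)) (hSu : S ≠ Finset.univ) (hS : Sᶜ.Nonempty)
    (μ : ℝ) (hμ : μ = Sᶜ.inf' hS s)
    (n : Fin N) (hn : n ∈ S) (hsn : μ ≤ s n) (hen : 0 < e n) :
    (∑ m ∈ S \ {n}, e m) +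
        C / ((S \ {n})ᶜ.inf'
          (hS.mono (Finset.compl_subset_compl.mpr (Finset.sdiff_subset))) s) ^ 2
      < (∑ m ∈ S, e m) + C / μ ^ 2 := by
  have hcompl : (S \ {n})ᶜ = insert n Sᶜ := by
    ext x
    simp only [Finset.mem_compl, Finset.mem_sdiff, Finset.mem_insert,
      Finset.mem_singleton]
    by_cases hx : x = n <;> simp [hx, hn]
  have hinf : (S \ {n})ᶜ.inf'
      (hS.mono (Finset.compl_subset_compl.mpr (Finset.sdiff_subset))) s = μ := by
    rw [hμ]
    have := Finset.inf'_insert hS (f := s) (b := n)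
    rw [show ((S \ {n})ᶜ.inf'
        (hS.mono (Finset.compl_subset_compl.mpr (Finset.sdiff_subset))) s)
        = (insert n Sᶜ).inf' (Finset.insert_nonempty n _) s by
      congr 1 <;> simp [hcompl]]
    rw [this]
    rw [hμ] at hsn
    exact min_eq_right hsn
  rw [hinf]
  have hsum : (∑ m ∈ S \ {n}, e m) = (∑ m ∈ S, e m) - e n := by
    rw [Finset.sdiff_singleton_eq_erase, ← Finset.add_sum_erase S e hn]
    ring
  rw [hsum]
  linarith
end

section
/- Let d > 0, B > 0, λ > 0, SNR_m > 0, and let g_m ∈ ℝ^d be nonzero. Define λ_m = 4 ln(2) · ‖g_m‖_∞² · B log₂(1 + SNR_m) and A_m(λ) = (1/(2 ln 2)) ( (λ_m/λ)^{1/3} − 1 ). Then the function r ↦ d ‖g_m‖_∞² / (1 + 2 ln(2) r)² + λ · d r / (B log₂(1 + SNR_m)) attains its minimum over r ≥ 0 at the unique point r_m*(λ) = max{ A_m(λ), 0 }. -/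
lemma aux_min (μ t s : ℝ) (hμ : 0 < μ) (ht : 0 < t) (hs : 1 ≤ s) :
    μ * (t^3/2) / (max t 1)^2 + μ * max t 1 ≤ μ * (t^3/2) / s^2 + μ * s ∧
    (μ * (t^3/2) / s^2 + μ * s = μ * (t^3/2) / (max t 1)^2 + μ * max t 1 → s = max t 1) := by
  set s0 := max t 1 with hs0
  have hs0_ge : (1:ℝ) ≤ s0 := le_max_right _ _
  have hs0_pos : 0 < s0 := lt_of_lt_of_le one_pos hs0_ge
  have hspos : 0 < s := lt_of_lt_of_le one_pos hs
  have hdiff : μ * (t^3/2) / s^2 + μ * s - (μ * (t^3/2) / s0^2 + μ * s0)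
      = (s - s0) * (μ * s^2 * s0^2 - μ * (t^3/2) * (s + s0)) / (s^2 * s0^2) := by
    field_simp
    ring
  have hnum : 0 ≤ (s - s0) * (μ * s^2 * s0^2 - μ * (t^3/2) * (s + s0)) ∧
      ((s - s0) * (μ * s^2 * s0^2 - μ * (t^3/2) * (s + s0)) = 0 → s = s0) := by
    rcases le_or_gt 1 t with h1 | h1
    · have hst : s0 = t := max_eq_left h1
      rw [hst]
      have hid : (s - t) * (μ * s^2 * t^2 - μ * (t^3/2) * (s + t))
          = μ * t^2 / 2 * ((s - t)^2 * (2*s + t)) := by ring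
      rw [hid]
      constructor
      · positivity
      · intro h
        have h2 : (s - t)^2 * (2*s + t) = 0 := by
          have hc : μ * t^2 / 2 ≠ 0 := by positivity
          exact (mul_eq_zero.mp h).resolve_left hc
        have h3 : 2*s + t ≠ 0 := by positivity
        have h4 : (s - t)^2 = 0 := (mul_eq_zero.mp h2).resolve_right h3
        have := pow_eq_zero_iff (n := 2) (by norm_num) |>.mp h4
        linarith
    · have hst : s0 = 1 := max_eq_right h1.le
      rw [hst]
      have hfac : 0 < μ * s^2 * 1^2 - μ * (t^3/2) * (s + 1) := by
        have ht3 : t^3 < 1 := pow_lt_one₀ ht.le h1 (by norm_num)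
        have h4 : μ * t^3 * (s+1) < μ * 1 * (s+1) := by
          apply mul_lt_mul_of_pos_right _ (by linarith)
          exact mul_lt_mul_of_pos_left ht3 hμ
        nlinarith [mul_nonneg hμ.le (mul_nonneg (by linarith : (0:ℝ) ≤ 2*s+1)
          (by linarith : (0:ℝ) ≤ s-1))]
      constructor
      · exact mul_nonneg (by linarith) hfac.le
      · intro h
        have : s - 1 = 0 := by
          rcases mul_eq_zero.mp h with h' | h'
          · exact h'
          · exact absurd h' hfac.ne'
        linarith
  refine ⟨?_, ?_⟩
  · have hden : 0 < s^2 * s0^2 := by positivity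
    nlinarith [hnum.1, div_nonneg hnum.1 hden.le]
  · intro h
    have h0 : (s - s0) * (μ * s^2 * s0^2 - μ * (t^3/2) * (s + s0)) / (s^2 * s0^2) = 0 := by
      rw [← hdiff]; linarith
    have hden : (s^2 * s0^2) ≠ 0 := by positivity
    exact hnum.2 (by field_simp at h0; linarith [h0])

/-- With `λ_m = 4 ln 2 · ‖g_m‖_∞² · B log₂(1 + SNR_m)` and
`A_m(λ) = (1/(2 ln 2))((λ_m/λ)^{1/3} − 1)`, the per-device Lagrangian term
`r ↦ d‖g_m‖_∞²/(1 + 2 ln 2 · r)² + λ d r / (B log₂(1 + SNR_m))` attains its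
minimum over `r ≥ 0` at the unique point `r_m*(λ) = max{A_m(λ), 0}`. -/
theorem stmt_12 {d : ℕ} (hd : 0 < d) (B lam snr : ℝ)
    (hB : 0 < B) (hlam : 0 < lam) (hsnr : 0 < snr)
    (g : Fin d → ℝ) (hg : g ≠ 0)
    (G : ℝ) (hG1 : ∀ i, |g i| ≤ G) (hG2 : ∃ i, |g i| = G)
    (lamm : ℝ) (hlamm : lamm = 4 * Real.log 2 * G ^ 2 * (B * Real.logb 2 (1 + snr)))
    (A : ℝ) (hA : A = (1 / (2 * Real.log 2)) * ((lamm / lam) ^ ((1 : ℝ) / 3) - 1))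
    (rstar : ℝ) (hrstar : rstar = max A 0)
    (f : ℝ → ℝ)
    (hf : ∀ r, f r = (d : ℝ) * G ^ 2 / (1 + 2 * Real.log 2 * r) ^ 2
        + lam * ((d : ℝ) * r / (B * Real.logb 2 (1 + snr)))) :
    0 ≤ rstar ∧
    (∀ r ∈ Set.Ici (0 : ℝ), f rstar ≤ f r) ∧
    (∀ r ∈ Set.Ici (0 : ℝ), f r = f rstar → r = rstar) := by
  -- basic positivity facts
  set c : ℝ := 2 * Real.log 2 with hc_def
  have hlog2 : 0 < Real.log 2 := Real.log_pos (by norm_num)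
  have hc : 0 < c := by positivity
  set K : ℝ := B * Real.logb 2 (1 + snr) with hK_def
  have hK : 0 < K := by
    have : 0 < Real.logb 2 (1 + snr) := Real.logb_pos (by norm_num) (by linarith)
    positivity
  have hG : 0 < G := by
    obtain ⟨j, hj⟩ := Function.ne_iff.mp hg
    have : 0 < |g j| := abs_pos.mpr hj
    exact lt_of_lt_of_le this (hG1 j)
  have hlamm' : lamm = 2 * c * G^2 * K := by rw [hlamm]; ring
  have hlamm_pos : 0 < lamm := by rw [hlamm']; positivity
  set t : ℝ := (lamm / lam) ^ ((1:ℝ)/3) with ht_def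
  have hquot : 0 < lamm / lam := div_pos hlamm_pos hlam
  have ht : 0 < t := Real.rpow_pos_of_pos hquot _
  have ht3 : t ^ 3 = lamm / lam := by
    rw [ht_def, ← Real.rpow_natCast ((lamm/lam) ^ ((1:ℝ)/3)) 3,
      ← Real.rpow_mul hquot.le]
    norm_num
  set μ : ℝ := lam * d / (c * K) with hμ_def
  have hμ : 0 < μ := by
    have hd' : (0:ℝ) < d := Nat.cast_pos.mpr hd
    positivity
  -- rewrite f in terms of s = 1 + c r
  have hP : μ * (t^3/2) = (d:ℝ) * G^2 := by
    rw [ht3, hlamm', hμ_def]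
    field_simp
  have hf' : ∀ r : ℝ, f r = μ * (t^3/2) / (1 + c*r)^2 + μ * (1 + c*r) - μ := by
    intro r
    rw [hf, hP]
    have : μ * (1 + c*r) - μ = lam * ((d:ℝ) * r / K) := by
      rw [hμ_def]; field_simp; ring
    linarith [this]
  -- rstar facts
  have hcA : 1 + c * A = t := by
    rw [hA]
    field_simp
    ring
  have hrstar0 : 0 ≤ rstar := by rw [hrstar]; exact le_max_right _ _
  have hsstar : 1 + c * rstar = max t 1 := by
    rw [hrstar]
    rcases le_total A 0 with h | h
    · rw [max_eq_right h, max_eq_right (by linarith [mul_nonpos_of_nonneg_of_nonpos hc.le h] : t ≤ 1)]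
      ring
    · rw [max_eq_left h, hcA.symm]
      have : 1 ≤ 1 + c * A := by nlinarith
      rw [max_eq_left this]
  refine ⟨hrstar0, ?_, ?_⟩
  · intro r hr
    have hr' : (1:ℝ) ≤ 1 + c * r := by nlinarith [Set.mem_Ici.mp hr]
    have := (aux_min μ t (1 + c*r) hμ ht hr').1
    rw [hf' r, hf' rstar, hsstar]
    linarith
  · intro r hr heq
    have hr' : (1:ℝ) ≤ 1 + c * r := by nlinarith [Set.mem_Ici.mp hr]
    have key := (aux_min μ t (1 + c*r) hμ ht hr').2
    rw [hf' r, hf' rstar, hsstar] at heq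
    have : 1 + c * r = max t 1 := key (by linarith)
    rw [← hsstar] at this
    have := mul_left_cancel₀ hc.ne' (by linarith : c * r = c * rstar)
    exact this
end
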